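/- Let R > 0 and H > 0, and let (m_k) and (n_k) be sequences of positive integers with n_k → ∞ and m_k/n_k² → s for some s ≥ 0. Then the Schwarz lantern areas A_k = 2·n_k·R·sin(π/n_k)·√(H² + m_k²·R²·(1 − cos(π/n_k))²) converge to 2πR·√(H² + s²·π⁴·R²/4) as k → ∞. -/

import Mathlib

/-!
Since `sin x = x · sinc x` and `1 - cos x = (x² / 2) · sinc (x / 2)²` with `sinc` continuous and
`sinc 0 = 1`, we get `n sin (π / n) → π` and `n² (1 - cos (π / n)) → π² / 2`. Writing
`m (1 - cos (π / n)) = (m / n²) · n² (1 - cos (π / n)) → s π² / 2`, the area formula converges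
by continuity of the square root.
-/

open Filter Real Topology

namespace Real

lemma sin_eq_mul_sinc (x : ℝ) : sin x = x * sinc x := by
  rcases eq_or_ne x 0 with rfl | hx
  · simp
  · rw [sinc_of_ne_zero hx, mul_div_cancel₀ _ hx]

lemma one_sub_cos_eq_mul_sinc_sq (x : ℝ) : 1 - cos x = x ^ 2 / 2 * sinc (x / 2) ^ 2 := by
  have h := sin_sq_eq_half_sub (x / 2)
  rw [mul_div_cancel₀ x two_ne_zero, sin_eq_mul_sinc] at h
  linear_combination (-2) * h

lemma tendsto_sinc_div_atTop (a : ℝ) : Tendsto (fun t : ℝ => sinc (a / t)) atTop (𝓝 1) :=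
  (continuous_sinc.tendsto' 0 1 sinc_zero).comp (tendsto_const_nhds.div_atTop tendsto_id)

lemma tendsto_mul_sin_div_atTop (a : ℝ) :
    Tendsto (fun t : ℝ => t * sin (a / t)) atTop (𝓝 a) := by
  have h := (tendsto_sinc_div_atTop a).const_mul a
  rw [mul_one] at h
  refine h.congr' ?_
  filter_upwards [eventually_ne_atTop 0] with t ht
  rw [sin_eq_mul_sinc, ← mul_assoc, mul_div_cancel₀ _ ht]

lemma tendsto_sq_mul_one_sub_cos_div_atTop (a : ℝ) :
    Tendsto (fun t : ℝ => t ^ 2 * (1 - cos (a / t))) atTop (𝓝 (a ^ 2 / 2)) := by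
  have h := ((tendsto_sinc_div_atTop (a / 2)).pow 2).const_mul (a ^ 2 / 2)
  rw [one_pow, mul_one] at h
  refine h.congr' ?_
  filter_upwards [eventually_ne_atTop 0] with t ht
  rw [one_sub_cos_eq_mul_sinc_sq, div_right_comm]
  field_simp

end Real

theorem schwarz_lantern_area_limit_general
    (R H : ℝ)
    (m n : ℕ → ℕ)
    (s : ℝ)
    (hntop : Tendsto (fun k => (n k : ℝ)) atTop atTop)
    (hmn : Tendsto (fun k => (m k : ℝ) / (n k : ℝ) ^ 2) atTop (nhds s)) :
    Tendsto
      (fun k => 2 * (n k : ℝ) * R * Real.sin (π / (n k : ℝ)) *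
        Real.sqrt (H ^ 2 + (m k : ℝ) ^ 2 * R ^ 2 * (1 - Real.cos (π / (n k : ℝ))) ^ 2))
      atTop
      (nhds (2 * π * R * Real.sqrt (H ^ 2 + s ^ 2 * π ^ 4 * R ^ 2 / 4))) := by
  have hsin := (tendsto_mul_sin_div_atTop π).comp hntop
  have hcos : Tendsto (fun k => (m k : ℝ) * (1 - cos (π / n k))) atTop (𝓝 (s * (π ^ 2 / 2))) := by
    refine (hmn.mul ((tendsto_sq_mul_one_sub_cos_div_atTop π).comp hntop)).congr' ?_
    filter_upwards [hntop.eventually_ne_atTop 0] with k hk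
    simp only [Function.comp_apply]
    field_simp
  have harea := (hsin.const_mul (2 * R)).mul (((hcos.pow 2).const_mul (R ^ 2)).const_add (H ^ 2)).sqrt
  rw [show H ^ 2 + s ^ 2 * π ^ 4 * R ^ 2 / 4 = H ^ 2 + R ^ 2 * (s * (π ^ 2 / 2)) ^ 2 by ring]
  convert harea using 2 with k
  · simp only [Function.comp_apply]
    ring_nf
  · ring

/-- Convergence of the Schwarz lantern area: if `n_k → ∞` and `m_k / n_k² → s ≥ 0`, then
the lantern areas `2 n_k R sin(π/n_k) √(H² + m_k² R² (1 - cos(π/n_k))²)` converge to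
`2πR √(H² + s² π⁴ R² / 4)`. -/
theorem schwarz_lantern_area_limit
    (R H : ℝ) (hR : 0 < R) (hH : 0 < H)
    (m n : ℕ → ℕ) (hm : ∀ k, 0 < m k) (hn : ∀ k, 0 < n k)
    (s : ℝ) (hs : 0 ≤ s)
    (hntop : Tendsto (fun k => (n k : ℝ)) atTop atTop)
    (hmn : Tendsto (fun k => (m k : ℝ) / (n k : ℝ) ^ 2) atTop (nhds s)) :
    Tendsto
      (fun k => 2 * (n k : ℝ) * R * Real.sin (π / (n k : ℝ)) *
        Real.sqrt (H ^ 2 + (m k : ℝ) ^ 2 * R ^ 2 * (1 - Real.cos (π / (n k : ℝ))) ^ 2))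
      atTop
      (nhds (2 * π * R * Real.sqrt (H ^ 2 + s ^ 2 * π ^ 4 * R ^ 2 / 4))) :=
  schwarz_lantern_area_limit_general R H m n s hntop hmn
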